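/- With the setup of the cluster C defined from the minimal permutation π_0 and index j_0 (as in the cluster construction for the symmetrized maximal distance D = D_m(X,Y)): for any pair (x_w, y_{π_0(w)}) ∉ C and any pair (x_z, y_{π_0(z)}) ∈ C, one has |x_z − y_{π_0(w)}| ≥ D and |x_{j_0} − y_{π_0(w)}| ≥ D. -/

import Mathlib

open Finset
open scoped Classical

noncomputable def ed {d : ℕ} (x y : Fin d → ℤ) : ℝ :=
  Real.sqrt (∑ i, ((x i : ℝ) - (y i : ℝ)) ^ 2)

noncomputable def Dm {d n : ℕ} [NeZero n] (x y : Fin n → Fin d → ℤ) : ℝ :=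
  Finset.univ.inf' Finset.univ_nonempty fun π : Equiv.Perm (Fin n) =>
    Finset.univ.sup' Finset.univ_nonempty fun j => ed (x j) (y (π j))

/-- `(x z, y (π₀ z))` belongs to the cluster `𝒞`: either it is directly within
distance `< D` of `x j₀`, or it is reachable from `x j₀` by a chain of distinct
pairs with consecutive distances `< D`. -/
def inCluster {d n : ℕ} (x y : Fin n → Fin d → ℤ) (π₀ : Equiv.Perm (Fin n))
    (D : ℝ) (j₀ z : Fin n) : Prop :=
  ed (x j₀) (y (π₀ z)) < D ∨
  ∃ (m : ℕ) (a : Fin (m + 1) → Fin n), Function.Injective a ∧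
    (∀ k, a k ≠ j₀ ∧ a k ≠ z) ∧
    ed (x j₀) (y (π₀ (a 0))) < D ∧
    (∀ k : Fin m, ed (x (a k.castSucc)) (y (π₀ (a k.succ))) < D) ∧
    ed (x (a (Fin.last m))) (y (π₀ z)) < D

/-! The separation property only says that the cluster is closed under one more step of
distance `< D`: a pair at distance `< D` from a cluster member, or from `x j₀`, is a
cluster member itself. -/

section Cluster

variable {d n : ℕ} (x y : Fin n → Fin d → ℤ) (π₀ : Equiv.Perm (Fin n)) (D : ℝ) (j₀ : Fin n)

theorem inCluster_of_mem_chain {m : ℕ} (a : Fin (m + 1) → Fin n)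
    (hinj : Function.Injective a) (hj₀ : ∀ k, a k ≠ j₀)
    (h0 : ed (x j₀) (y (π₀ (a 0))) < D)
    (hstep : ∀ k : Fin m, ed (x (a k.castSucc)) (y (π₀ (a k.succ))) < D) (k : Fin (m + 1)) :
    inCluster x y π₀ D j₀ (a k) := by
  induction k using Fin.cases with
  | zero => exact Or.inl h0
  | succ i =>
    have hle : i.val + 1 ≤ m + 1 := by omega
    let pre : Fin (i.val + 1) → Fin n := fun t => a (Fin.castLE hle t)
    refine Or.inr ⟨i.val, pre, hinj.comp (Fin.castLE_injective hle), fun t => ⟨hj₀ _, ?_⟩,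
      h0, fun t => hstep ⟨t.val, by omega⟩, hstep i⟩
    intro h
    have := congrArg Fin.val (hinj h)
    simp only [Fin.val_castLE, Fin.val_succ] at this
    omega

theorem inCluster_snoc {m : ℕ} (a : Fin (m + 1) → Fin n) (z w : Fin n)
    (hinj : Function.Injective a) (hne : ∀ k, a k ≠ j₀ ∧ a k ≠ z) (hw : w ∉ Set.range a)
    (hzj₀ : z ≠ j₀) (hzw : z ≠ w)
    (h0 : ed (x j₀) (y (π₀ (a 0))) < D)
    (hstep : ∀ k : Fin m, ed (x (a k.castSucc)) (y (π₀ (a k.succ))) < D)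
    (hlast : ed (x (a (Fin.last m))) (y (π₀ z)) < D)
    (hzw_lt : ed (x z) (y (π₀ w)) < D) :
    inCluster x y π₀ D j₀ w := by
  refine Or.inr ⟨m + 1, Fin.snoc a z,
    Fin.snoc_injective_of_injective hinj fun ⟨k, hk⟩ => (hne k).2 hk, ?_, ?_, ?_, ?_⟩
  · intro k
    induction k using Fin.lastCases with
    | last => simpa only [Fin.snoc_last] using ⟨hzj₀, hzw⟩
    | cast k =>
      simp only [Fin.snoc_castSucc]
      exact ⟨(hne k).1, fun h => hw ⟨k, h⟩⟩
  · simpa only [← Fin.castSucc_zero, Fin.snoc_castSucc] using h0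
  · intro k
    induction k using Fin.lastCases with
    | last => simpa only [Fin.snoc_castSucc, Fin.succ_last, Fin.snoc_last] using hlast
    | cast k =>
      simpa only [Fin.succ_castSucc, Fin.snoc_castSucc] using hstep k
  · simpa only [Fin.snoc_last] using hzw_lt

theorem inCluster_of_ed_lt {z w : Fin n} (hz : inCluster x y π₀ D j₀ z)
    (hzw : ed (x z) (y (π₀ w)) < D) : inCluster x y π₀ D j₀ w := by
  by_cases hzj₀ : z = j₀
  · exact Or.inl (hzj₀ ▸ hzw)
  by_cases hzw' : z = w
  · exact hzw' ▸ hz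
  rcases hz with hdirect | ⟨m, a, hinj, hne, h0, hstep, hlast⟩
  · exact Or.inr ⟨0, fun _ => z, fun _ _ _ => Subsingleton.elim (α := Fin 1) _ _,
      fun _ => ⟨hzj₀, hzw'⟩, hdirect, Fin.elim0, hzw⟩
  by_cases hw : w ∈ Set.range a
  · obtain ⟨k, rfl⟩ := hw
    exact inCluster_of_mem_chain x y π₀ D j₀ a hinj (fun k => (hne k).1) h0 hstep k
  · exact inCluster_snoc x y π₀ D j₀ a z w hinj hne hw hzj₀ hzw' h0 hstep hlast hzw

end Cluster

theorem cluster_separation_general {d n : ℕ} [NeZero n] (x y : Fin n → Fin d → ℤ)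
    (π₀ : Equiv.Perm (Fin n))
    (j₀ : Fin n) :
    ∀ w z : Fin n, ¬ inCluster x y π₀ (Dm x y) j₀ w → inCluster x y π₀ (Dm x y) j₀ z →
      Dm x y ≤ ed (x z) (y (π₀ w)) ∧ Dm x y ≤ ed (x j₀) (y (π₀ w)) :=
  fun _ _ hw hz => ⟨le_of_not_gt fun h => hw (inCluster_of_ed_lt x y π₀ _ j₀ hz h),
    le_of_not_gt fun h => hw (Or.inl h)⟩

theorem cluster_separation {d n : ℕ} [NeZero n] (x y : Fin n → Fin d → ℤ)
    (hx : Function.Injective x) (hy : Function.Injective y)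
    (π₀ : Equiv.Perm (Fin n))
    (hπ₀D : (Finset.univ.sup' Finset.univ_nonempty fun j => ed (x j) (y (π₀ j)))
      = Dm x y)
    (hπ₀N : ∀ π : Equiv.Perm (Fin n),
      (Finset.univ.sup' Finset.univ_nonempty fun j => ed (x j) (y (π j))) = Dm x y →
      (Finset.univ.filter fun j => ed (x j) (y (π₀ j)) = Dm x y).card ≤
        (Finset.univ.filter fun j => ed (x j) (y (π j)) = Dm x y).card)
    (j₀ : Fin n) (hj₀ : ed (x j₀) (y (π₀ j₀)) = Dm x y) :
    ∀ w z : Fin n, ¬ inCluster x y π₀ (Dm x y) j₀ w → inCluster x y π₀ (Dm x y) j₀ z →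
      Dm x y ≤ ed (x z) (y (π₀ w)) ∧ Dm x y ≤ ed (x j₀) (y (π₀ w)) :=
  cluster_separation_general x y π₀ j₀
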